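/- arXiv:1905.00993 — 7 statements merged into one kernel-verified Lean document; each statement's English description precedes it below -/
import Mathlib

section
/- Games as complete pairs: (1) For every nonempty prefix-closed set P ⊆ List M, the set ts(P) of all t-skeletons on P is a consistent set of t-skeletons, its union ⋃ ts(P) equals P, and ts(P) is complete. (2) Conversely, for every complete set 𝒮 of t-skeletons, the subsets of ⋃𝒮 satisfying (Tree), (Edet) and (Oinc) relative to ⋃𝒮 (i.e. the t-skeletons on the union) are precisely the elements of 𝒮. -/
/-!
Games as complete pairs (Theorem 3.17 of "Game semantics of Martin-Löf type theory").
Positions are finite lists over a type `M` of moves.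
-/

namespace GameSemantics

variable {M : Type*}

/-- A set of positions is prefix-closed: every prefix of a member belongs to it. -/
def PrefClosed (X : Set (List M)) : Prop :=
  ∀ ⦃s t : List M⦄, s <+: t → t ∈ X → s ∈ X

/-- (Tree): nonempty and prefix-closed. -/
def Tree (S : Set (List M)) : Prop :=
  S.Nonempty ∧ ∀ (s : List M) (m : M), s ++ [m] ∈ S → s ∈ S

/-- (Edet): determinacy on even-length positions. -/
def Edet (S : Set (List M)) : Prop :=
  ∀ (s : List M) (m n n' : M), s ++ [m, n] ∈ S → s ++ [m, n'] ∈ S →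
    Even (s ++ [m, n]).length → n = n'

/-- (Oinc) relative to `P`: inclusiveness on odd-length positions of `P`. -/
def Oinc (S P : Set (List M)) : Prop :=
  ∀ (s : List M) (m : M), s ++ [m] ∈ P → Odd (s ++ [m]).length → s ∈ S → s ++ [m] ∈ S

/-- A t-skeleton on `P`: a subset of `P` satisfying (Tree), (Edet) and (Oinc)
relative to `P`. -/
def TSkelOn (P S : Set (List M)) : Prop :=
  S ⊆ P ∧ Tree S ∧ Edet S ∧ Oinc S P

/-- Consistency `σ ≍ τ` of two t-skeletons. -/
def ConsistentPair (σ τ : Set (List M)) : Prop :=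
  ∀ (s : List M) (m : M), s ++ [m] ∈ σ ∪ τ → Odd (s ++ [m]).length →
    s ∈ σ ∩ τ → s ++ [m] ∈ σ ∩ τ

/-- A consistent set of t-skeletons: nonempty, each member satisfying (Tree) and
(Edet), and pairwise consistent. -/
def ConsistentSet (𝒮 : Set (Set (List M))) : Prop :=
  𝒮.Nonempty ∧ (∀ S ∈ 𝒮, Tree S ∧ Edet S) ∧
    ∀ σ ∈ 𝒮, ∀ τ ∈ 𝒮, ConsistentPair σ τ

/-- A complete set of t-skeletons: consistent, and every subset of the union
satisfying (Tree), (Edet) and (Oinc) relative to the union belongs to it. -/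
def CompleteSet (𝒮 : Set (Set (List M))) : Prop :=
  ConsistentSet 𝒮 ∧
    ∀ A : Set (List M), A ⊆ ⋃₀ 𝒮 → Tree A → Edet A → Oinc A (⋃₀ 𝒮) → A ∈ 𝒮

/-- Player's moves are copied from `p` and Opponent's are left free, which makes this a
t-skeleton on `P` through `p`; these skeletons show that the t-skeletons on `P` cover `P`. -/
def skeletonAlong (P : Set (List M)) (p : List M) : Set (List M) :=
  {t | t ∈ P ∧ ∀ r, r <+: t → Even r.length → r <+: p}

section SkeletonAlong

variable {P : Set (List M)} {p : List M}

lemma mem_skeletonAlong_self (hp : p ∈ P) : p ∈ skeletonAlong P p :=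
  ⟨hp, fun _ hr _ => hr⟩

lemma tree_skeletonAlong (hPC : PrefClosed P) (hp : p ∈ P) : Tree (skeletonAlong P p) := by
  refine ⟨⟨p, mem_skeletonAlong_self hp⟩, ?_⟩
  rintro s m ⟨hsP, hpre⟩
  have hs : s <+: s ++ [m] := List.prefix_append s [m]
  exact ⟨hPC hs hsP, fun r hr he => hpre r (hr.trans hs) he⟩

lemma edet_skeletonAlong : Edet (skeletonAlong P p) := by
  rintro s m n n' ⟨-, h⟩ ⟨-, h'⟩ hev
  have hp : s ++ [m, n] <+: p := h _ List.prefix_rfl hev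
  have hp' : s ++ [m, n'] <+: p := h' _ List.prefix_rfl (by simpa using hev)
  have hlen : (s ++ [m, n]).length ≤ (s ++ [m, n']).length := by simp
  simpa using (List.prefix_of_prefix_length_le hp hp' hlen).eq_of_length (by simp)

lemma oinc_skeletonAlong : Oinc (skeletonAlong P p) P := by
  rintro s m hmP hodd ⟨-, hpre⟩
  refine ⟨hmP, fun r hr he => ?_⟩
  rcases List.prefix_concat_iff.mp hr with rfl | hrs
  · exact absurd he (Nat.not_even_iff_odd.mpr hodd)
  · exact hpre r hrs he

lemma tSkelOn_skeletonAlong (hPC : PrefClosed P) (hp : p ∈ P) :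
    TSkelOn P (skeletonAlong P p) :=
  ⟨fun _ ht => ht.1, tree_skeletonAlong hPC hp, edet_skeletonAlong, oinc_skeletonAlong⟩

end SkeletonAlong

section SkeletonsOn

variable {P : Set (List M)}

lemma sUnion_tSkelOn (hPC : PrefClosed P) : ⋃₀ {S | TSkelOn P S} = P := by
  refine Set.Subset.antisymm (Set.sUnion_subset fun S hS => hS.1) fun p hp => ?_
  exact ⟨skeletonAlong P p, tSkelOn_skeletonAlong hPC hp, mem_skeletonAlong_self hp⟩

lemma TSkelOn.consistentPair {σ τ : Set (List M)} (hσ : TSkelOn P σ) (hτ : TSkelOn P τ) :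
    ConsistentPair σ τ := by
  rintro s m hm hodd ⟨hsσ, hsτ⟩
  have hmP : s ++ [m] ∈ P := hm.elim (fun h => hσ.1 h) (fun h => hτ.1 h)
  exact ⟨hσ.2.2.2 s m hmP hodd hsσ, hτ.2.2.2 s m hmP hodd hsτ⟩

lemma consistentSet_tSkelOn (hP : P.Nonempty) (hPC : PrefClosed P) :
    ConsistentSet {S | TSkelOn P S} :=
  ⟨⟨_, tSkelOn_skeletonAlong hPC hP.some_mem⟩, fun _ hS => ⟨hS.2.1, hS.2.2.1⟩,
    fun _ hσ _ hτ => hσ.consistentPair hτ⟩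

lemma completeSet_tSkelOn (hP : P.Nonempty) (hPC : PrefClosed P) :
    CompleteSet {S | TSkelOn P S} := by
  refine ⟨consistentSet_tSkelOn hP hPC, fun A hA hT hE hO => ?_⟩
  rw [sUnion_tSkelOn hPC] at hA hO
  exact ⟨hA, hT, hE, hO⟩

end SkeletonsOn

/-- A position of odd length in the union lies in some `τ ∈ 𝒮`; its parent is then in `τ` by
(Tree), and consistency of `S` with `τ` pushes the position into `S`. -/
lemma ConsistentSet.oinc_sUnion {𝒮 : Set (Set (List M))} (h𝒮 : ConsistentSet 𝒮)
    {S : Set (List M)} (hS : S ∈ 𝒮) : Oinc S (⋃₀ 𝒮) := by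
  rintro s m ⟨τ, hτ, hmτ⟩ hodd hsS
  have hsτ : s ∈ τ := (h𝒮.2.1 τ hτ).1.2 s m hmτ
  exact (h𝒮.2.2 S hS τ hτ s m (Or.inr hmτ) hodd ⟨hsS, hsτ⟩).1

lemma CompleteSet.setOf_tSkelOn_sUnion {𝒮 : Set (Set (List M))} (h𝒮 : CompleteSet 𝒮) :
    {A | TSkelOn (⋃₀ 𝒮) A} = 𝒮 := by
  refine Set.Subset.antisymm (fun A hA => h𝒮.2 A hA.1 hA.2.1 hA.2.2.1 hA.2.2.2) fun S hS => ?_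
  exact ⟨Set.subset_sUnion_of_mem hS, (h𝒮.1.2.1 S hS).1, (h𝒮.1.2.1 S hS).2,
    h𝒮.1.oinc_sUnion hS⟩

/-- **Games as complete pairs**: (1) for every nonempty prefix-closed `P`, the set of
all t-skeletons on `P` is consistent, has union `P`, and is complete; (2) conversely,
for every complete set `𝒮` of t-skeletons, the t-skeletons on the union `⋃₀ 𝒮` are
precisely the elements of `𝒮`. -/
theorem games_as_complete_pairs :
    (∀ P : Set (List M), P.Nonempty → PrefClosed P →
      ConsistentSet {S : Set (List M) | TSkelOn P S} ∧
        ⋃₀ {S : Set (List M) | TSkelOn P S} = P ∧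
        CompleteSet {S : Set (List M) | TSkelOn P S}) ∧
    (∀ 𝒮 : Set (Set (List M)), CompleteSet 𝒮 →
      {A : Set (List M) | TSkelOn (⋃₀ 𝒮) A} = 𝒮) :=
  ⟨fun _ hP hPC =>
      ⟨consistentSet_tSkelOn hP hPC, sUnion_tSkelOn hPC, completeSet_tSkelOn hP hPC⟩,
    fun _ h𝒮 => h𝒮.setOf_tSkelOn_sUnion⟩

end GameSemantics
end

section
/- First skeleton/strategy lemma: Let P ⊆ List M be nonempty and prefix-closed and ≃ an identification of positions on P. For every strategy g on (P, ≃) there exists a valid skeleton σ on P such that σ ∝ g. -/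
/-!
First skeleton/strategy lemma (Lemma 3.35 of "Game semantics of Martin-Löf type
theory").  Positions are finite lists over a type `M` of moves.
-/

namespace GameSemantics

variable {M : Type*}

/-- A skeleton on `P`: a nonempty, even-prefix-closed, deterministic subset of
`P^Even`. -/
def IsSkeleton (P σ : Set (List M)) : Prop :=
  σ ⊆ P ∧ (∀ s ∈ σ, Even s.length) ∧ σ.Nonempty ∧
    (∀ (s : List M) (m n : M), s ++ [m, n] ∈ σ → s ∈ σ) ∧
    (∀ (s : List M) (m n n' : M), s ++ [m, n] ∈ σ → s ++ [m, n'] ∈ σ → n = n')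

/-- An identification of positions on `P`: an equivalence relation on `P`
satisfying the axioms I1, I2 and I3. -/
structure IsIdent (P : Set (List M)) (R : List M → List M → Prop) : Prop where
  mem_left : ∀ ⦃s t : List M⦄, R s t → s ∈ P
  mem_right : ∀ ⦃s t : List M⦄, R s t → t ∈ P
  refl : ∀ s ∈ P, R s s
  symm : ∀ ⦃s t : List M⦄, R s t → R t s
  trans : ∀ ⦃s t u : List M⦄, R s t → R t u → R s u
  length_eq : ∀ ⦃s t : List M⦄, R s t → s.length = t.length
  init : ∀ ⦃s t : List M⦄ ⦃m n : M⦄, R (s ++ [m]) (t ++ [n]) → R s t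
  extend : ∀ ⦃s t : List M⦄ (m : M), R s t → s ++ [m] ∈ P →
    ∃ n : M, t ++ [n] ∈ P ∧ R (s ++ [m]) (t ++ [n])

/-- A strategy on `(P, R)`: a nonempty, even-prefix-closed subset of `P^Even`
that is deterministic up to `R` (ST2) and representation independent (ST3). -/
def IsStrategy (P : Set (List M)) (R : List M → List M → Prop)
    (g : Set (List M)) : Prop :=
  g ⊆ P ∧ (∀ s ∈ g, Even s.length) ∧ g.Nonempty ∧
    (∀ (s : List M) (m n : M), s ++ [m, n] ∈ g → s ∈ g) ∧
    (∀ (s t : List M) (m n l r : M), s ++ [m, n] ∈ g → t ++ [l, r] ∈ g →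
      R (s ++ [m]) (t ++ [l]) → R (s ++ [m, n]) (t ++ [l, r])) ∧
    (∀ s t : List M, s ∈ g → t ∈ P → R s t → t ∈ g)

/-- A skeleton `σ` implements a strategy `g`, written `σ ∝ g`. -/
def Implements (R : List M → List M → Prop) (σ g : Set (List M)) : Prop :=
  σ ⊆ g ∧
    ∀ (s : List M) (m n : M), s ++ [m, n] ∈ g → s ∈ σ →
      ∃ n' : M, s ++ [m, n'] ∈ σ ∧ R (s ++ [m, n]) (s ++ [m, n'])

/-- `σ ≲ τ` for skeletons on `(P, R)`. -/
def SkelLe (P : Set (List M)) (R : List M → List M → Prop)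
    (σ τ : Set (List M)) : Prop :=
  ∀ (s : List M) (m n : M), s ++ [m, n] ∈ σ →
    ∀ t ∈ τ, ∀ l : M, t ++ [l] ∈ P → R (s ++ [m]) (t ++ [l]) →
      ∃ r : M, t ++ [l, r] ∈ τ ∧ R (s ++ [m, n]) (t ++ [l, r])

/-- Validity of a skeleton on `(P, R)`: `σ ≃ σ`, i.e. `σ ≲ σ`. -/
def SkelValid (P : Set (List M)) (R : List M → List M → Prop)
    (σ : Set (List M)) : Prop :=
  SkelLe P R σ σ ∧ SkelLe P R σ σ

/-!
Fix, for every position `t` and Opponent move `m`, one Player response `n` with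
`t ++ [m, n] ∈ g` whenever `g` offers any. The skeleton consists of the plays of `g`
in which Player always gives the chosen response. By I3 and ST3 the strategy answers every
move that is identified with one it answers, so the chosen response is available
there too, and ST2 makes it identified with any other answer; this gives both
validity and `σ ∝ g`.
-/

theorem nil_mem_of_mem {g : Set (List M)} (hev : ∀ s ∈ g, Even s.length)
    (hpc : ∀ (s : List M) (m n : M), s ++ [m, n] ∈ g → s ∈ g) :
    ∀ s ∈ g, ([] : List M) ∈ g := by
  intro s hs
  induction h : s.length using Nat.strong_induction_on generalizing s with
  | _ k ih =>
    rcases s.eq_nil_or_concat with rfl | ⟨u, n, rfl⟩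
    · exact hs
    rcases u.eq_nil_or_concat with rfl | ⟨t, m, rfl⟩
    · exact absurd (hev _ hs) (by simp)
    · have ht : t ++ [m, n] ∈ g := by simpa using hs
      exact ih t.length (by simp [← h]) t (hpc t m n ht) rfl

namespace IsStrategy

variable {P : Set (List M)} {R : List M → List M → Prop} {g : Set (List M)}

theorem subset (hg : IsStrategy P R g) : g ⊆ P := hg.1

theorem even_length (hg : IsStrategy P R g) : ∀ s ∈ g, Even s.length := hg.2.1

theorem mem_of_append_pair_mem (hg : IsStrategy P R g) {s : List M} {m n : M}
    (h : s ++ [m, n] ∈ g) : s ∈ g :=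
  hg.2.2.2.1 s m n h

theorem rel_of_rel (hg : IsStrategy P R g) {s t : List M} {m n l r : M}
    (hs : s ++ [m, n] ∈ g) (ht : t ++ [l, r] ∈ g) (h : R (s ++ [m]) (t ++ [l])) :
    R (s ++ [m, n]) (t ++ [l, r]) :=
  hg.2.2.2.2.1 s t m n l r hs ht h

theorem mem_of_rel (hg : IsStrategy P R g) {s t : List M} (hs : s ∈ g) (ht : t ∈ P)
    (h : R s t) : t ∈ g :=
  hg.2.2.2.2.2 s t hs ht h

theorem nil_mem (hg : IsStrategy P R g) : ([] : List M) ∈ g :=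
  hg.2.2.1.elim (nil_mem_of_mem hg.even_length hg.2.2.2.1)

end IsStrategy

inductive Follows (F : List M → M → M) : List M → Prop
  | nil : Follows F []
  | snoc (s : List M) (m : M) : Follows F s → Follows F (s ++ [m, F s m])

theorem follows_append_pair_iff {F : List M → M → M} {s : List M} {m n : M} :
    Follows F (s ++ [m, n]) ↔ Follows F s ∧ n = F s m := by
  constructor
  · intro h
    generalize hu : s ++ [m, n] = u at h
    cases h with
    | nil => simp at hu
    | snoc s' m' h' =>
      obtain ⟨rfl, hmn⟩ := List.append_inj' hu rfl
      simp only [List.cons.injEq, and_true] at hmn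
      obtain ⟨rfl, rfl⟩ := hmn
      exact ⟨h', rfl⟩
  · rintro ⟨h, rfl⟩
    exact .snoc s m h

theorem isSkeleton_inter_follows {P g : Set (List M)} (F : List M → M → M) (hgP : g ⊆ P)
    (hev : ∀ s ∈ g, Even s.length)
    (hpc : ∀ (s : List M) (m n : M), s ++ [m, n] ∈ g → s ∈ g) (hnil : [] ∈ g) :
    IsSkeleton P (g ∩ {s | Follows F s}) := by
  refine ⟨Set.inter_subset_left.trans hgP, fun s hs => hev s hs.1, ⟨[], hnil, .nil⟩,
    fun s m n hs => ⟨hpc s m n hs.1, (follows_append_pair_iff.1 hs.2).1⟩, ?_⟩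
  intro s m n n' hn hn'
  rw [(follows_append_pair_iff.1 hn.2).2, (follows_append_pair_iff.1 hn'.2).2]

/-- The fallback `m` is a junk value: it is used only when `g` offers no response. -/
noncomputable def response (g : Set (List M)) (t : List M) (m : M) : M :=
  open Classical in if h : ∃ n, t ++ [m, n] ∈ g then h.choose else m

theorem append_response_mem {g : Set (List M)} {t : List M} {m : M}
    (h : ∃ n, t ++ [m, n] ∈ g) : t ++ [m, response g t m] ∈ g := by
  rw [response, dif_pos h]
  exact h.choose_spec

section Strategy

variable {P : Set (List M)} {R : List M → List M → Prop} {g : Set (List M)}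

theorem append_response_mem_inter_follows {s : List M} {m n : M}
    (hs : s ∈ g ∩ {s | Follows (response g) s}) (hn : s ++ [m, n] ∈ g) :
    s ++ [m, response g s m] ∈ g ∩ {s | Follows (response g) s} :=
  ⟨append_response_mem ⟨n, hn⟩, .snoc s m hs.2⟩

theorem skelLe_inter_follows_response (hR : IsIdent P R) (hg : IsStrategy P R g) :
    SkelLe P R (g ∩ {s | Follows (response g) s}) (g ∩ {s | Follows (response g) s}) := by
  intro s m n hsmn t ht l _ hsl
  have hmem : s ++ [m] ++ [n] ∈ P := by simpa using hg.subset hsmn.1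
  obtain ⟨r, hrP, hr⟩ := hR.extend n hsl hmem
  simp only [List.append_assoc, List.singleton_append] at hrP hr
  have htlr : t ++ [l, r] ∈ g := hg.mem_of_rel hsmn.1 hrP hr
  exact ⟨response g t l, append_response_mem_inter_follows ht htlr,
    hg.rel_of_rel hsmn.1 (append_response_mem ⟨r, htlr⟩) hsl⟩

theorem implements_inter_follows_response (hR : IsIdent P R) (hg : IsStrategy P R g) :
    Implements R (g ∩ {s | Follows (response g) s}) g := by
  refine ⟨Set.inter_subset_left, fun s m n hn hs => ?_⟩
  have hsm : R (s ++ [m]) (s ++ [m]) :=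
    hR.init (n := n) (by simpa using hR.refl _ (hg.subset hn))
  exact ⟨response g s m, append_response_mem_inter_follows hs hn,
    hg.rel_of_rel hn (append_response_mem ⟨n, hn⟩) hsm⟩

end Strategy

theorem first_skeleton_strategy_lemma_general (P : Set (List M))
    (R : List M → List M → Prop)
    (hR : IsIdent P R) (g : Set (List M)) (hg : IsStrategy P R g) :
    ∃ σ : Set (List M), IsSkeleton P σ ∧ SkelValid P R σ ∧ Implements R σ g :=
  have hle := skelLe_inter_follows_response hR hg
  ⟨_, isSkeleton_inter_follows (response g) hg.subset hg.even_length
      (fun _ _ _ => hg.mem_of_append_pair_mem) hg.nil_mem,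
    ⟨hle, hle⟩, implements_inter_follows_response hR hg⟩

/-- **First skeleton/strategy lemma**: every strategy on `(P, R)` is implemented
by some valid skeleton on `P`. -/
theorem first_skeleton_strategy_lemma (P : Set (List M))
    (R : List M → List M → Prop) (hPne : P.Nonempty) (hPpc : PrefClosed P)
    (hR : IsIdent P R) (g : Set (List M)) (hg : IsStrategy P R g) :
    ∃ σ : Set (List M), IsSkeleton P σ ∧ SkelValid P R σ ∧ Implements R σ g :=
  first_skeleton_strategy_lemma_general P R hR g hg

end GameSemantics
end

section
/- Second skeleton/strategy lemma: Let P ⊆ List M be nonempty and prefix-closed and ≃ an identification of positions on P. If σ is a skeleton on P and g a strategy on (P, ≃) with σ ∝ g, then for all s·m·n ∈ g, s̃ ∈ σ and s̃·m̃ ∈ P with s·m ≃ s̃·m̃, there exists s̃·m̃·ñ ∈ σ with s·m·n ≃ s̃·m̃·ñ. -/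
namespace GameSemantics

variable {M : Type*}

theorem IsStrategy.exists_extension_of_ident {P g : Set (List M)}
    {R : List M → List M → Prop} (hR : IsIdent P R) (hg : IsStrategy P R g)
    {s t : List M} {m n l : M} (hsmn : s ++ [m, n] ∈ g) (hsm : R (s ++ [m]) (t ++ [l])) :
    ∃ r : M, t ++ [l, r] ∈ g ∧ R (s ++ [m, n]) (t ++ [l, r]) := by
  obtain ⟨hgP, -, -, -, -, hgR⟩ := hg
  have hsmnP : s ++ [m] ++ [n] ∈ P := by simpa using hgP hsmn
  obtain ⟨r, htlrP, hR'⟩ := hR.extend n hsm hsmnP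
  simp only [List.append_assoc, List.singleton_append] at htlrP hR'
  exact ⟨r, hgR _ _ hsmn htlrP hR', hR'⟩

theorem second_skeleton_strategy_lemma_general (P : Set (List M))
    (R : List M → List M → Prop)
    (hR : IsIdent P R) (σ g : Set (List M))
    (hg : IsStrategy P R g) (himpl : Implements R σ g) :
    ∀ (s : List M) (m n : M), s ++ [m, n] ∈ g →
      ∀ s' ∈ σ, ∀ m' : M, s' ++ [m'] ∈ P → R (s ++ [m]) (s' ++ [m']) →
        ∃ n' : M, s' ++ [m', n'] ∈ σ ∧ R (s ++ [m, n]) (s' ++ [m', n']) := by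
  intro s m n hsmn s' hs' m' _ hsm
  obtain ⟨r, hs'm'r, hR₁⟩ := hg.exists_extension_of_ident hR hsmn hsm
  obtain ⟨n', hn', hR₂⟩ := himpl.2 s' m' r hs'm'r hs'
  exact ⟨n', hn', hR.trans hR₁ hR₂⟩

/-- **Second skeleton/strategy lemma**: if a skeleton `σ` on `P` implements a
strategy `g` on `(P, R)`, then for all `s·m·n ∈ g`, `s̃ ∈ σ` and `s̃·m̃ ∈ P` with
`s·m ≃ s̃·m̃`, there exists `s̃·m̃·ñ ∈ σ` with `s·m·n ≃ s̃·m̃·ñ`. -/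
theorem second_skeleton_strategy_lemma (P : Set (List M))
    (R : List M → List M → Prop) (hPne : P.Nonempty) (hPpc : PrefClosed P)
    (hR : IsIdent P R) (σ g : Set (List M)) (hσ : IsSkeleton P σ)
    (hg : IsStrategy P R g) (himpl : Implements R σ g) :
    ∀ (s : List M) (m n : M), s ++ [m, n] ∈ g →
      ∀ s' ∈ σ, ∀ m' : M, s' ++ [m'] ∈ P → R (s ++ [m]) (s' ++ [m']) →
        ∃ n' : M, s' ++ [m', n'] ∈ σ ∧ R (s ++ [m, n]) (s' ++ [m', n']) :=
  second_skeleton_strategy_lemma_general P R hR σ g hg himpl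

end GameSemantics
end

section
/- Constraints on skeletons/strategies (totality part): Let P ⊆ List M be nonempty and prefix-closed and ≃ an identification of positions on P. Then: (1) if a strategy g on (P, ≃) is total, then every skeleton σ on P with σ ∝ g is total; (2) if a valid skeleton σ on P is total, then its saturation Sat(σ) is a total strategy on (P, ≃). (This is the totality clause of the paper's lemma; the well-bracketing and noetherianity clauses, which require the label, pointer and P-view structure of positions, are not included.) -/
/-!
Constraints on skeletons/strategies, totality part (Lemma 3.40 of "Game
semantics of Martin-Löf type theory").  Positions are finite lists over a type
`M` of moves.
-/

namespace GameSemantics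

variable {M : Type*}

/-- The saturation `Sat(σ)` of a skeleton `σ`. -/
def Sat (P : Set (List M)) (R : List M → List M → Prop)
    (σ : Set (List M)) : Set (List M) :=
  {s ∈ P | ∃ t ∈ σ, R s t}

/-- Totality of a set of (even-length) positions relative to `P`: every one-move
extension in `P` of a member can be answered within the set. -/
def Total (P X : Set (List M)) : Prop :=
  ∀ (s : List M) (m : M), s ++ [m] ∈ P → s ∈ X → ∃ n : M, s ++ [m, n] ∈ X

/-! A saturation `Sat(σ)` inherits each strategy axiom from the corresponding skeleton axiom by
transporting along `R`; for the response condition (ST2) the two responses are compared inside `σ`,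
where validity produces a response and determinism makes it the given one. -/

theorem _root_.List.exists_eq_append_pair {u : List M} (h : 2 ≤ u.length) :
    ∃ (u₀ : List M) (a b : M), u = u₀ ++ [a, b] := by
  rcases u.eq_nil_or_concat with rfl | ⟨u₁, b, rfl⟩
  · simp at h
  rcases u₁.eq_nil_or_concat with rfl | ⟨u₀, a, rfl⟩
  · simp at h
  · exact ⟨u₀, a, b, by simp⟩

theorem Implements.total {R : List M → List M → Prop} {P σ g : Set (List M)}
    (himp : Implements R σ g) (hg : Total P g) : Total P σ := by
  intro s m hsm hs
  obtain ⟨n, hn⟩ := hg s m hsm (himp.1 hs)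
  obtain ⟨n', hn', -⟩ := himp.2 s m n hn hs
  exact ⟨n', hn'⟩

namespace IsIdent

variable {P : Set (List M)} {R : List M → List M → Prop}

theorem exists_append_pair (hR : IsIdent P R) {s u : List M} {m n : M}
    (h : R (s ++ [m, n]) u) :
    ∃ (u₀ : List M) (a b : M), u = u₀ ++ [a, b] ∧ R (s ++ [m]) (u₀ ++ [a]) := by
  have hlen : 2 ≤ u.length := by simp [← hR.length_eq h]
  obtain ⟨u₀, a, b, rfl⟩ := List.exists_eq_append_pair hlen
  refine ⟨u₀, a, b, rfl, hR.init (m := n) (n := b) ?_⟩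
  simpa only [List.append_assoc, List.cons_append, List.nil_append] using h

end IsIdent

section Saturation

variable {P : Set (List M)} {R : List M → List M → Prop} {σ : Set (List M)}

theorem subset_sat (hR : IsIdent P R) (hσ : σ ⊆ P) : σ ⊆ Sat P R σ :=
  fun s hs => ⟨hσ hs, s, hs, hR.refl s (hσ hs)⟩

theorem mem_sat_of_ident (hR : IsIdent P R) {s t : List M} (hs : s ∈ Sat P R σ)
    (ht : t ∈ P) (hst : R s t) : t ∈ Sat P R σ := by
  obtain ⟨-, u, hu, hsu⟩ := hs
  exact ⟨ht, u, hu, hR.trans (hR.symm hst) hsu⟩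

theorem even_length_of_mem_sat (hR : IsIdent P R) (hσ : ∀ s ∈ σ, Even s.length)
    {s : List M} (hs : s ∈ Sat P R σ) : Even s.length := by
  obtain ⟨-, u, hu, hsu⟩ := hs
  exact hR.length_eq hsu ▸ hσ u hu

theorem mem_sat_of_append_pair_mem (hR : IsIdent P R)
    (hσ : ∀ (s : List M) (m n : M), s ++ [m, n] ∈ σ → s ∈ σ) {s : List M} {m n : M}
    (hs : s ++ [m, n] ∈ Sat P R σ) : s ∈ Sat P R σ := by
  obtain ⟨-, u, hu, hsu⟩ := hs
  obtain ⟨u₀, a, b, rfl, hsu₀⟩ := hR.exists_append_pair hsu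
  have hs : R s u₀ := hR.init hsu₀
  exact ⟨hR.mem_left hs, u₀, hσ u₀ a b hu, hs⟩

theorem ident_responses_of_mem_sat (hR : IsIdent P R) (hσ : IsSkeleton P σ)
    (hle : SkelLe P R σ σ) {s t : List M} {m n l r : M} (hs : s ++ [m, n] ∈ Sat P R σ)
    (ht : t ++ [l, r] ∈ Sat P R σ) (hst : R (s ++ [m]) (t ++ [l])) :
    R (s ++ [m, n]) (t ++ [l, r]) := by
  obtain ⟨-, u, hu, hsu⟩ := hs
  obtain ⟨-, v, hv, htv⟩ := ht
  obtain ⟨u₀, a, b, rfl, hsu₀⟩ := hR.exists_append_pair hsu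
  obtain ⟨v₀, c, d, rfl, htv₀⟩ := hR.exists_append_pair htv
  have huv : R (u₀ ++ [a]) (v₀ ++ [c]) := hR.trans (hR.symm hsu₀) (hR.trans hst htv₀)
  obtain ⟨d', hd', hbd'⟩ :=
    hle u₀ a b hu v₀ (hσ.2.2.2.1 v₀ c d hv) c (hR.mem_right htv₀) huv
  obtain rfl : d' = d := hσ.2.2.2.2 v₀ c d' d hd' hv
  exact hR.trans hsu (hR.trans hbd' (hR.symm htv))

theorem isStrategy_sat (hR : IsIdent P R) (hσ : IsSkeleton P σ) (hle : SkelLe P R σ σ) :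
    IsStrategy P R (Sat P R σ) := by
  obtain ⟨s, hs⟩ := hσ.2.2.1
  exact ⟨fun _ h => h.1, fun _ => even_length_of_mem_sat hR hσ.2.1, ⟨s, subset_sat hR hσ.1 hs⟩,
    fun _ _ _ => mem_sat_of_append_pair_mem hR hσ.2.2.2.1,
    fun _ _ _ _ _ _ => ident_responses_of_mem_sat hR hσ hle, fun _ _ => mem_sat_of_ident hR⟩

theorem total_sat (hR : IsIdent P R) (hσP : σ ⊆ P) (hσ : Total P σ) : Total P (Sat P R σ) := by
  rintro s m hsm ⟨-, u, hu, hsu⟩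
  obtain ⟨a, hua, hsua⟩ := hR.extend m hsu hsm
  obtain ⟨b, huab⟩ := hσ u a hua hu
  have huab' : u ++ [a] ++ [b] ∈ P := List.append_cons u a [b] ▸ hσP huab
  obtain ⟨n, hsmn, huabn⟩ := hR.extend b (hR.symm hsua) huab'
  simp only [List.append_assoc, List.cons_append, List.nil_append] at hsmn huabn
  exact ⟨n, hsmn, u ++ [a, b], huab, hR.symm huabn⟩

end Saturation

theorem totality_skeletons_strategies_general (P : Set (List M))
    (R : List M → List M → Prop)
    (hR : IsIdent P R) :
    (∀ g σ : Set (List M), IsStrategy P R g → Total P g →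
      IsSkeleton P σ → Implements R σ g → Total P σ) ∧
    (∀ σ : Set (List M), IsSkeleton P σ → SkelValid P R σ → Total P σ →
      IsStrategy P R (Sat P R σ) ∧ Total P (Sat P R σ)) :=
  ⟨fun _ _ _ hg _ himp => himp.total hg,
    fun _ hσ hvalid hσt => ⟨isStrategy_sat hR hσ hvalid.1, total_sat hR hσ.1 hσt⟩⟩

/-- **Constraints on skeletons/strategies (totality part)**: (1) any skeleton
implementing a total strategy is total; (2) the saturation of a valid total
skeleton is a total strategy. -/
theorem totality_skeletons_strategies (P : Set (List M))
    (R : List M → List M → Prop) (hPne : P.Nonempty) (hPpc : PrefClosed P)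
    (hR : IsIdent P R) :
    (∀ g σ : Set (List M), IsStrategy P R g → Total P g →
      IsSkeleton P σ → Implements R σ g → Total P σ) ∧
    (∀ σ : Set (List M), IsSkeleton P σ → SkelValid P R σ → Total P σ →
      IsStrategy P R (Sat P R σ) ∧ Total P (Sat P R σ)) :=
  totality_skeletons_strategies_general P R hR

end GameSemantics
end

section
/- The identification of skeletons is a partial equivalence relation: Let P ⊆ List M be nonempty and prefix-closed and ≃ an identification of positions on P. Then: (a) if skeletons σ and τ on P satisfy σ ≃ τ, then for every s ∈ σ there exists t ∈ τ with s ≃ t; (b) the identification ≃ of skeletons on (P, ≃) is symmetric and transitive (a PER) on the set of skeletons on P. -/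
/-!
Every member of a skeleton is reached from `[]` by adding pairs of moves. Along such a chain
`σ ≲ τ` lets one follow each pair inside `τ` up to `≃`: extend the matching position of `τ`
by an identified O-move (axiom I3), and `σ ≲ τ` supplies the identified answer. This gives (a).
For transitivity, a play `s·m·n` of `σ` is first transported into `τ` by (a) and `σ ≲ τ`,
and from there into `υ` by `τ ≲ υ`.
-/

/-!
The identification of skeletons is a partial equivalence relation (First PER
lemma and its corollary in "Game semantics of Martin-Löf type theory").
Positions are finite lists over a type `M` of moves.
-/

namespace GameSemantics

variable {M : Type*}

/-- `σ ≃ τ` for skeletons on `(P, R)`. -/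
def SkelEquiv (P : Set (List M)) (R : List M → List M → Prop)
    (σ τ : Set (List M)) : Prop :=
  SkelLe P R σ τ ∧ SkelLe P R τ σ

section Skeleton

variable {P σ : Set (List M)}

theorem IsSkeleton.induction_on (hσ : IsSkeleton P σ) {motive : List M → Prop}
    (nil : [] ∈ σ → motive [])
    (pair : ∀ s m n, s ++ [m, n] ∈ σ → motive s → motive (s ++ [m, n])) :
    ∀ s ∈ σ, motive s := by
  intro s hs
  induction h : s.length using Nat.strong_induction_on generalizing s with
  | _ k ih =>
    rcases List.eq_nil_or_concat s with rfl | ⟨s', n, rfl⟩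
    · exact nil hs
    rcases List.eq_nil_or_concat s' with rfl | ⟨s, m, rfl⟩
    · simpa using hσ.2.1 _ hs
    have hs' : s ++ [m, n] ∈ σ := by simpa using hs
    simpa using pair s m n hs' (ih s.length (by simp [← h]) s (hσ.2.2.2.1 s m n hs') rfl)

theorem IsSkeleton.nil_mem (hσ : IsSkeleton P σ) : ([] : List M) ∈ σ := by
  obtain ⟨s, hs⟩ := hσ.2.2.1
  -- descending from `s` by removing pairs of moves ends at `[]`
  exact hσ.induction_on (motive := fun _ => [] ∈ σ) id (fun _ _ _ _ h => h) s hs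

end Skeleton

section SkelLe

variable {P : Set (List M)} {R : List M → List M → Prop} {σ τ υ : Set (List M)}

theorem SkelLe.exists_rel (hP : PrefClosed P) (hR : IsIdent P R) (hσ : IsSkeleton P σ)
    (hτ : IsSkeleton P τ) (h : SkelLe P R σ τ) : ∀ s ∈ σ, ∃ t ∈ τ, R s t := by
  refine hσ.induction_on (fun _ => ⟨[], hτ.nil_mem, hR.refl _ (hτ.1 hτ.nil_mem)⟩) ?_
  rintro s m n hsmn ⟨t, ht, hst⟩
  obtain ⟨l, hlP, hml⟩ := hR.extend m hst (hP ⟨[n], by simp⟩ (hσ.1 hsmn))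
  obtain ⟨r, hr, hnr⟩ := h s m n hsmn t ht l hlP hml
  exact ⟨t ++ [l, r], hr, hnr⟩

theorem SkelLe.trans (hP : PrefClosed P) (hR : IsIdent P R) (hσ : IsSkeleton P σ)
    (hτ : IsSkeleton P τ) (hστ : SkelLe P R σ τ) (hτυ : SkelLe P R τ υ) :
    SkelLe P R σ υ := by
  intro s m n hsmn u hu l hlP hml
  obtain ⟨t, ht, hst⟩ := hστ.exists_rel hP hR hσ hτ s (hσ.2.2.2.1 s m n hsmn)
  obtain ⟨l', hl'P, hml'⟩ := hR.extend m hst (hP ⟨[n], by simp⟩ (hσ.1 hsmn))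
  obtain ⟨r', hr', hnr'⟩ := hστ s m n hsmn t ht l' hl'P hml'
  obtain ⟨r, hr, hr'r⟩ := hτυ t l' r' hr' u hu l hlP (hR.trans (hR.symm hml') hml)
  exact ⟨r, hr, hR.trans hnr' hr'r⟩

end SkelLe

theorem SkelEquiv.symm {P : Set (List M)} {R : List M → List M → Prop} {σ τ : Set (List M)}
    (h : SkelEquiv P R σ τ) : SkelEquiv P R τ σ :=
  ⟨h.2, h.1⟩

theorem skeleton_identification_per_general (P : Set (List M))
    (R : List M → List M → Prop) (hPpc : PrefClosed P)
    (hR : IsIdent P R) :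
    (∀ σ τ : Set (List M), IsSkeleton P σ → IsSkeleton P τ →
      SkelEquiv P R σ τ → ∀ s ∈ σ, ∃ t ∈ τ, R s t) ∧
    (∀ σ τ : Set (List M), IsSkeleton P σ → IsSkeleton P τ →
      SkelEquiv P R σ τ → SkelEquiv P R τ σ) ∧
    (∀ σ τ υ : Set (List M), IsSkeleton P σ → IsSkeleton P τ → IsSkeleton P υ →
      SkelEquiv P R σ τ → SkelEquiv P R τ υ → SkelEquiv P R σ υ) :=
  ⟨fun _ _ hσ hτ h => h.1.exists_rel hPpc hR hσ hτ,
    fun _ _ _ _ h => h.symm,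
    fun _ _ _ hσ hτ hυ hστ hτυ =>
      ⟨hστ.1.trans hPpc hR hσ hτ hτυ.1, hτυ.2.trans hPpc hR hυ hτ hστ.2⟩⟩

/-- **PER lemma for skeletons**: (a) identified skeletons cover each other up to
the identification of positions; (b) the identification of skeletons is symmetric
and transitive on the skeletons on `P`. -/
theorem skeleton_identification_per (P : Set (List M))
    (R : List M → List M → Prop) (hPne : P.Nonempty) (hPpc : PrefClosed P)
    (hR : IsIdent P R) :
    (∀ σ τ : Set (List M), IsSkeleton P σ → IsSkeleton P τ →
      SkelEquiv P R σ τ → ∀ s ∈ σ, ∃ t ∈ τ, R s t) ∧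
    (∀ σ τ : Set (List M), IsSkeleton P σ → IsSkeleton P τ →
      SkelEquiv P R σ τ → SkelEquiv P R τ σ) ∧
    (∀ σ τ υ : Set (List M), IsSkeleton P σ → IsSkeleton P τ → IsSkeleton P υ →
      SkelEquiv P R σ τ → SkelEquiv P R τ υ → SkelEquiv P R σ υ) :=
  skeleton_identification_per_general P R hPpc hR

end GameSemantics
end

section
/- First t-skeleton/p-strategy lemma (purified form): Let P ⊆ List M be nonempty and prefix-closed and ≃ an identification of positions on P. Suppose g ⊆ P is nonempty and prefix-closed, satisfies ST2 on even-length members (s·m·n, t·l·r ∈ g^Even with s·m ≃ t·l imply s·m·n ≃ t·l·r) and ST3 (s ∈ g, t ∈ P, s ≃ t imply t ∈ g). If S ⊆ P is a t-skeleton implementing g — that is, S ⊆ g; s·m ∈ g^Odd and s ∈ S imply s·m ∈ S; and for every s·m·n ∈ g^Even with s ∈ S there exists s·m·n′ ∈ S with s·m·n ≃ s·m·n′ — then S is valid: for all s·m·n ∈ S^Even and s̃·m̃ ∈ S^Odd with s·m ≃ s̃·m̃ there exists s̃·m̃·ñ ∈ S with s·m·n ≃ s̃·m̃·ñ. (This is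 the paper's first t-skeleton/p-strategy lemma, with the predicative game specialized to its set of positions and identification of actual positions; g satisfies the axioms of a p-strategy apart from the implementability axiom PST, which is the hypothesis on S.) -/
/-!
Axiom I3 transports Player's answer `n` at `s·m` across `s·m ≃ s̃·m̃` to some `s̃·m̃·r ∈ P`,
which lies in `g` by ST3; since `s̃ ∈ S`, implementability replaces `r` by an answer
`ñ` with `s̃·m̃·ñ ∈ S`, and transitivity of `≃` finishes.
-/

namespace GameSemantics

variable {M : Type*}

namespace IsIdent

variable {P : Set (List M)} {R : List M → List M → Prop}

theorem exists_append_pair_mem_of_saturated (hR : IsIdent P R) {g : Set (List M)}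
    (hgP : g ⊆ P) (hsat : ∀ s t : List M, s ∈ g → t ∈ P → R s t → t ∈ g)
    {s t : List M} {m n l : M} (hg : s ++ [m, n] ∈ g) (hRml : R (s ++ [m]) (t ++ [l])) :
    ∃ r : M, t ++ [l, r] ∈ g ∧ R (s ++ [m, n]) (t ++ [l, r]) := by
  have hP : s ++ [m] ++ [n] ∈ P := by simpa using hgP hg
  obtain ⟨r, hrP, hRr⟩ := hR.extend n hRml hP
  simp only [List.append_assoc, List.cons_append, List.nil_append] at hrP hRr
  exact ⟨r, hsat _ _ hg hrP hRr, hRr⟩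

end IsIdent

theorem first_tskeleton_pstrategy_lemma_general (P : Set (List M))
    (R : List M → List M → Prop)
    (hR : IsIdent P R)
    -- `g` satisfies the axioms of a p-strategy apart from PST:
    (g : Set (List M)) (hgP : g ⊆ P)
    (hST3 : ∀ s t : List M, s ∈ g → t ∈ P → R s t → t ∈ g)
    -- `S` is a t-skeleton:
    (S : Set (List M)) (hSpc : PrefClosed S)
    -- `S` implements `g`:
    (hSg : S ⊆ g)
    (hImpl : ∀ (s : List M) (m n : M), s ++ [m, n] ∈ g →
      Even (s ++ [m, n]).length → s ∈ S →
      ∃ n' : M, s ++ [m, n'] ∈ S ∧ R (s ++ [m, n]) (s ++ [m, n'])) :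
    -- then `S` is valid:
    ∀ (s : List M) (m n : M), s ++ [m, n] ∈ S → Even (s ++ [m, n]).length →
      ∀ (s' : List M) (m' : M), s' ++ [m'] ∈ S → Odd (s' ++ [m']).length →
        R (s ++ [m]) (s' ++ [m']) →
        ∃ n' : M, s' ++ [m', n'] ∈ S ∧ R (s ++ [m, n]) (s' ++ [m', n']) := by
  intro s m n hS hev s' m' hS' _ hRel
  obtain ⟨r, hrg, hRr⟩ := hR.exists_append_pair_mem_of_saturated hgP hST3 (hSg hS) hRel
  have hrev : Even (s' ++ [m', r]).length := hR.length_eq hRr ▸ hev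
  obtain ⟨n', hn'S, hRn'⟩ := hImpl s' m' r hrg hrev (hSpc (List.prefix_append _ _) hS')
  exact ⟨n', hn'S, hR.trans hRr hRn'⟩

/-- **First t-skeleton/p-strategy lemma (purified form)**: if `g ⊆ P` is nonempty,
prefix-closed and satisfies ST2 (on even-length members) and ST3, and `S ⊆ P` is
a t-skeleton implementing `g`, then `S` is valid. -/
theorem first_tskeleton_pstrategy_lemma (P : Set (List M))
    (R : List M → List M → Prop) (hPne : P.Nonempty) (hPpc : PrefClosed P)
    (hR : IsIdent P R)
    -- `g` satisfies the axioms of a p-strategy apart from PST: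
    (g : Set (List M)) (hgP : g ⊆ P) (hgne : g.Nonempty) (hgpc : PrefClosed g)
    (hST2 : ∀ (s t : List M) (m n l r : M),
      s ++ [m, n] ∈ g → Even (s ++ [m, n]).length →
      t ++ [l, r] ∈ g → Even (t ++ [l, r]).length →
      R (s ++ [m]) (t ++ [l]) → R (s ++ [m, n]) (t ++ [l, r]))
    (hST3 : ∀ s t : List M, s ∈ g → t ∈ P → R s t → t ∈ g)
    -- `S` is a t-skeleton:
    (S : Set (List M)) (hSP : S ⊆ P) (hSne : S.Nonempty) (hSpc : PrefClosed S)
    (hSdet : ∀ (s : List M) (m n n' : M), s ++ [m, n] ∈ S → s ++ [m, n'] ∈ S →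
      Even (s ++ [m, n]).length → n = n')
    -- `S` implements `g`:
    (hSg : S ⊆ g)
    (hOinc : ∀ (s : List M) (m : M), s ++ [m] ∈ g → Odd (s ++ [m]).length →
      s ∈ S → s ++ [m] ∈ S)
    (hImpl : ∀ (s : List M) (m n : M), s ++ [m, n] ∈ g →
      Even (s ++ [m, n]).length → s ∈ S →
      ∃ n' : M, s ++ [m, n'] ∈ S ∧ R (s ++ [m, n]) (s ++ [m, n'])) :
    -- then `S` is valid:
    ∀ (s : List M) (m n : M), s ++ [m, n] ∈ S → Even (s ++ [m, n]).length →
      ∀ (s' : List M) (m' : M), s' ++ [m'] ∈ S → Odd (s' ++ [m']).length →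
        R (s ++ [m]) (s' ++ [m']) →
        ∃ n' : M, s' ++ [m', n'] ∈ S ∧ R (s ++ [m, n]) (s' ++ [m', n']) :=
  first_tskeleton_pstrategy_lemma_general P R hR g hgP hST3 S hSpc hSg hImpl

end GameSemantics
end

section
/- Deterministic-join completeness implies directed and bounded completeness: Let 𝒯 be a set of t-skeletons that is deterministic-join complete, i.e. whenever 𝒮 ⊆ 𝒯 is nonempty, pairwise consistent and deterministic (s·m·n, s·m·n′ ∈ (⋃𝒮)^Even imply n = n′), one has ⋃𝒮 ∈ 𝒯. Order 𝒯 by σ ≤ τ iff σ ≍ τ and σ ⊆ τ. Then ≤ is a partial order on 𝒯; every nonempty ≤-directed subset D ⊆ 𝒯 has a least upper bound in (𝒯, ≤), namely ⋃D; and every nonempty subset of 𝒯 that is bounded above in (𝒯, ≤) has a least upper bound in (𝒯, ≤), namely its union. -/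
/-!
If two t-skeletons lie below a common t-skeleton `υ`, they are consistent with each other
(an odd extension present in one lies in `υ`, hence in the other by `≍`), and their union is
deterministic because `υ` is. So a family that is pairwise bounded — in particular a directed
family, or one bounded above — is pairwise consistent with a deterministic union, and
deterministic-join completeness puts its union in `𝒯`. Consistency of the family makes each
member `≍`-below the union, and the union lies below every common upper bound.
-/

namespace GameSemantics

variable {M : Type*}

/-- A t-skeleton: nonempty, prefix-closed, deterministic on even-length
positions. -/
def TSkelAbs (S : Set (List M)) : Prop :=
  S.Nonempty ∧ PrefClosed S ∧
    ∀ (s : List M) (m n n' : M), s ++ [m, n] ∈ S → s ++ [m, n'] ∈ S →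
      Even (s ++ [m, n]).length → n = n'

/-- The order `σ ≤ τ` on t-skeletons: `σ ≍ τ` and `σ ⊆ τ`. -/
def TLeOrd (σ τ : Set (List M)) : Prop :=
  ConsistentPair σ τ ∧ σ ⊆ τ

def EvenDeterministic (X : Set (List M)) : Prop :=
  ∀ (s : List M) (m n n' : M), s ++ [m, n] ∈ X → s ++ [m, n'] ∈ X →
    Even (s ++ [m, n]).length → n = n'

def DetJoinComplete (𝒯 : Set (Set (List M))) : Prop :=
  ∀ 𝒮 ⊆ 𝒯, 𝒮.Nonempty → (∀ σ ∈ 𝒮, ∀ τ ∈ 𝒮, ConsistentPair σ τ) →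
    EvenDeterministic (⋃₀ 𝒮) → ⋃₀ 𝒮 ∈ 𝒯

theorem TSkelAbs.evenDeterministic {S : Set (List M)} (h : TSkelAbs S) :
    EvenDeterministic S :=
  h.2.2

namespace TLeOrd

variable {σ τ υ : Set (List M)}

theorem refl (σ : Set (List M)) : TLeOrd σ σ :=
  ⟨fun _ _ hm _ _ => by rcases hm with h | h <;> exact ⟨h, h⟩, subset_rfl⟩

theorem antisymm (h₁ : TLeOrd σ τ) (h₂ : TLeOrd τ σ) : σ = τ :=
  subset_antisymm h₁.2 h₂.2

theorem trans (h₁ : TLeOrd σ τ) (h₂ : TLeOrd τ υ) : TLeOrd σ υ := by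
  refine ⟨fun s m hm hodd hs => ?_, h₁.2.trans h₂.2⟩
  rcases hm with hm | hm
  · exact ⟨hm, h₂.2 (h₁.2 hm)⟩
  · have hτ := h₂.1 s m (Or.inr hm) hodd ⟨h₁.2 hs.1, hs.2⟩
    exact ⟨(h₁.1 s m (Or.inr hτ.1) hodd ⟨hs.1, h₁.2 hs.1⟩).1, hm⟩

theorem consistentPair (hσ : TLeOrd σ υ) (hτ : TLeOrd τ υ) :
    ConsistentPair σ τ := by
  intro s m hm hodd hs
  rcases hm with hm | hm
  · exact ⟨hm, (hτ.1 s m (Or.inr (hσ.2 hm)) hodd ⟨hs.2, hσ.2 hs.1⟩).1⟩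
  · exact ⟨(hσ.1 s m (Or.inr (hτ.2 hm)) hodd ⟨hs.1, hτ.2 hs.2⟩).1, hm⟩

end TLeOrd

theorem evenDeterministic_sUnion {𝒮 : Set (Set (List M))}
    (h : ∀ σ ∈ 𝒮, ∀ τ ∈ 𝒮, ∃ υ, EvenDeterministic υ ∧ σ ⊆ υ ∧ τ ⊆ υ) :
    EvenDeterministic (⋃₀ 𝒮) := by
  rintro s m n n' ⟨σ, hσ, hn⟩ ⟨τ, hτ, hn'⟩ hev
  obtain ⟨υ, hυ, hσυ, hτυ⟩ := h σ hσ τ hτ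
  exact hυ s m n n' (hσυ hn) (hτυ hn') hev

theorem tLeOrd_sUnion {𝒮 : Set (Set (List M))} (hpre : ∀ τ ∈ 𝒮, PrefClosed τ)
    (hcons : ∀ σ ∈ 𝒮, ∀ τ ∈ 𝒮, ConsistentPair σ τ) {σ : Set (List M)} (hσ : σ ∈ 𝒮) :
    TLeOrd σ (⋃₀ 𝒮) := by
  refine ⟨fun s m hm hodd hs => ?_, Set.subset_sUnion_of_mem hσ⟩
  rcases hm with hm | ⟨τ, hτ, hm⟩
  · exact ⟨hm, σ, hσ, hm⟩
  · have hsτ : s ∈ τ := hpre τ hτ (List.prefix_append s [m]) hm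
    exact ⟨(hcons σ hσ τ hτ s m (Or.inr hm) hodd ⟨hs.1, hsτ⟩).1, τ, hτ, hm⟩

theorem sUnion_tLeOrd {𝒮 : Set (Set (List M))} {τ : Set (List M)}
    (h : ∀ σ ∈ 𝒮, TLeOrd σ τ) : TLeOrd (⋃₀ 𝒮) τ := by
  refine ⟨fun s m hm hodd hs => ?_, Set.sUnion_subset fun σ hσ => (h σ hσ).2⟩
  obtain ⟨σ₀, hσ₀, hsσ₀⟩ := hs.1
  rcases hm with ⟨σ, hσ, hm⟩ | hm
  · exact ⟨⟨σ, hσ, hm⟩, (h σ hσ).2 hm⟩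
  · exact ⟨⟨σ₀, hσ₀, ((h σ₀ hσ₀).1 s m (Or.inr hm) hodd ⟨hsσ₀, hs.2⟩).1⟩, hm⟩

theorem sUnion_isLUB_of_pairwise_bounded {𝒯 : Set (Set (List M))}
    (h𝒯 : ∀ S ∈ 𝒯, TSkelAbs S) (hdj : DetJoinComplete 𝒯)
    {𝒮 : Set (Set (List M))} (hsub : 𝒮 ⊆ 𝒯) (hne : 𝒮.Nonempty)
    (hbd : ∀ σ ∈ 𝒮, ∀ σ' ∈ 𝒮, ∃ υ ∈ 𝒯, TLeOrd σ υ ∧ TLeOrd σ' υ) :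
    ⋃₀ 𝒮 ∈ 𝒯 ∧ (∀ σ ∈ 𝒮, TLeOrd σ (⋃₀ 𝒮)) ∧
      ∀ τ ∈ 𝒯, (∀ σ ∈ 𝒮, TLeOrd σ τ) → TLeOrd (⋃₀ 𝒮) τ := by
  have hcons : ∀ σ ∈ 𝒮, ∀ τ ∈ 𝒮, ConsistentPair σ τ := fun σ hσ τ hτ =>
    let ⟨_, _, hσυ, hτυ⟩ := hbd σ hσ τ hτ
    hσυ.consistentPair hτυ
  have hdet : EvenDeterministic (⋃₀ 𝒮) := evenDeterministic_sUnion fun σ hσ τ hτ =>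
    let ⟨υ, hυ, hσυ, hτυ⟩ := hbd σ hσ τ hτ
    ⟨υ, (h𝒯 υ hυ).evenDeterministic, hσυ.2, hτυ.2⟩
  exact ⟨hdj 𝒮 hsub hne hcons hdet,
    fun σ hσ => tLeOrd_sUnion (fun τ hτ => (h𝒯 τ (hsub hτ)).2.1) hcons hσ,
    fun _ _ => sUnion_tLeOrd⟩

/-- **Det-j completeness implies directed and bounded completeness**: if `𝒯` is a
deterministic-join complete set of t-skeletons, then `≤` is a partial order on
`𝒯`, every nonempty `≤`-directed subset of `𝒯` has its union as least upper
bound in `(𝒯, ≤)`, and every nonempty subset of `𝒯` bounded above in `(𝒯, ≤)`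
has its union as least upper bound in `(𝒯, ≤)`. -/
theorem detjoin_directed_bounded_complete (𝒯 : Set (Set (List M)))
    (h𝒯 : ∀ S ∈ 𝒯, TSkelAbs S)
    (hdj : ∀ 𝒮 ⊆ 𝒯, 𝒮.Nonempty → (∀ σ ∈ 𝒮, ∀ τ ∈ 𝒮, ConsistentPair σ τ) →
      (∀ (s : List M) (m n n' : M), s ++ [m, n] ∈ ⋃₀ 𝒮 → s ++ [m, n'] ∈ ⋃₀ 𝒮 →
        Even (s ++ [m, n]).length → n = n') →
      ⋃₀ 𝒮 ∈ 𝒯) :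
    (∀ σ ∈ 𝒯, TLeOrd σ σ) ∧
    (∀ σ ∈ 𝒯, ∀ τ ∈ 𝒯, TLeOrd σ τ → TLeOrd τ σ → σ = τ) ∧
    (∀ σ ∈ 𝒯, ∀ τ ∈ 𝒯, ∀ υ ∈ 𝒯, TLeOrd σ τ → TLeOrd τ υ → TLeOrd σ υ) ∧
    (∀ D ⊆ 𝒯, D.Nonempty → DirectedOn TLeOrd D →
      ⋃₀ D ∈ 𝒯 ∧ (∀ σ ∈ D, TLeOrd σ (⋃₀ D)) ∧
        ∀ τ ∈ 𝒯, (∀ σ ∈ D, TLeOrd σ τ) → TLeOrd (⋃₀ D) τ) ∧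
    (∀ B ⊆ 𝒯, B.Nonempty → (∃ τ ∈ 𝒯, ∀ σ ∈ B, TLeOrd σ τ) →
      ⋃₀ B ∈ 𝒯 ∧ (∀ σ ∈ B, TLeOrd σ (⋃₀ B)) ∧
        ∀ τ ∈ 𝒯, (∀ σ ∈ B, TLeOrd σ τ) → TLeOrd (⋃₀ B) τ) := by
  refine ⟨fun σ _ => TLeOrd.refl σ, fun σ _ τ _ => TLeOrd.antisymm,
    fun σ _ τ _ υ _ => TLeOrd.trans, ?_, ?_⟩
  · intro D hsub hne hdir
    exact sUnion_isLUB_of_pairwise_bounded h𝒯 hdj hsub hne fun σ hσ σ' hσ' =>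
      let ⟨υ, hυ, h⟩ := hdir σ hσ σ' hσ'
      ⟨υ, hsub hυ, h⟩
  · rintro B hsub hne ⟨τ, hτ, hall⟩
    exact sUnion_isLUB_of_pairwise_bounded h𝒯 hdj hsub hne fun σ hσ σ' hσ' =>
      ⟨τ, hτ, hall σ hσ, hall σ' hσ'⟩

end GameSemantics
end
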